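/- Let f, g : [−1, 1] → ℝ be continuous, strictly increasing functions such that 0 is the unique fixed point of each (for x ∈ [−1, 1], f(x) = x if and only if x = 0, and similarly for g). Let h : ℝ² → ℝ² be a homeomorphism such that h(x, 0) = (x, 0) for all x ∈ [−1, 1] and h(0, y) = (0, y) for all y ∈ [−1, 1], and define r on h([−1, 1]²) by r(h(x, y)) = h(f(x), g(y)). Then for every integer n ≥ 1 and every point p ∈ h([−1, 1]²) for which the iterates r(p), r²(p), …, r^{n−1}(p) remain in h([−1, 1]²): if rⁿ(p) = p, then p = (0, 0). Equivalently, the displacement vector field X(p) = rⁿ(p) − p is nonzero everywhere except at the origin. (This is item (1) of the paper's proposition on product maps; it holds because r is topologically conjugate to f × g, which has no periodic points other than the origin.) -/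

import Mathlib

/-!
Conjugating by `h` turns an `r`-orbit that stays in `h([−1, 1]²)` into an orbit of `f × g`
inside `[−1, 1]²`, so it suffices that `f` and `g` have no periodic points other than their
fixed points. For a strictly increasing map this holds because an orbit with `x < f x` keeps
increasing as long as it stays in the domain of monotonicity, so it can never return to `x`.
-/

open Set Function

section StrictMonoOn

variable {α : Type*} [Preorder α] {f : α → α} {s : Set α} {x : α} {n : ℕ}

theorem StrictMonoOn.iterate_lt_iterate_succ (hf : StrictMonoOn f s)
    (hs : ∀ k < n, f^[k] x ∈ s) (hx : x < f x) : ∀ k < n, f^[k] x < f^[k + 1] x := by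
  intro k
  induction k with
  | zero => intro _; exact hx
  | succ k ih =>
    intro hk
    have := hf (hs k (by omega)) (hs (k + 1) hk) (ih (by omega))
    simpa only [iterate_succ_apply'] using this

theorem StrictMonoOn.not_lt_apply_of_isPeriodicPt (hf : StrictMonoOn f s) (hn : 0 < n)
    (hs : ∀ k < n, f^[k] x ∈ s) (hx : IsPeriodicPt f n x) : ¬x < f x := by
  intro hlt
  have hmono : StrictMonoOn (fun k => f^[k] x) (Iic n) :=
    strictMonoOn_Iic_of_lt_succ fun k hk => by
      simpa only [Order.succ_eq_add_one] using hf.iterate_lt_iterate_succ hs hlt k hk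
  have := hmono (mem_Iic.2 (Nat.zero_le n)) (mem_Iic.2 le_rfl) hn
  exact this.ne hx.eq.symm

end StrictMonoOn

theorem StrictMonoOn.isFixedPt_of_isPeriodicPt {α : Type*} [LinearOrder α] {f : α → α}
    {s : Set α} {x : α} {n : ℕ} (hf : StrictMonoOn f s) (hn : 0 < n)
    (hs : ∀ k < n, f^[k] x ∈ s) (hx : IsPeriodicPt f n x) : IsFixedPt f x := by
  have hf_dual : StrictMonoOn (α := αᵒᵈ) (β := αᵒᵈ) f s := fun a ha b hb hab => hf hb ha hab
  have hge : ¬f x < x := hf_dual.not_lt_apply_of_isPeriodicPt hn hs hx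
  exact le_antisymm (not_lt.1 (hf.not_lt_apply_of_isPeriodicPt hn hs hx)) (not_lt.1 hge)

theorem Equiv.iterate_eq_of_semiconj_on {α β : Type*} (h : α ≃ β) {S : Set α} {F : α → α}
    {r : β → β} (hr : ∀ x ∈ S, r (h x) = h (F x)) {p : β} {n : ℕ}
    (hp : ∀ k < n, r^[k] p ∈ h '' S) : ∀ k ≤ n, r^[k] p = h (F^[k] (h.symm p)) := by
  intro k
  induction k with
  | zero => intro _; simp
  | succ k ih =>
    intro hk
    have hrk := ih (by omega)
    have hmem : F^[k] (h.symm p) ∈ S := h.injective.mem_set_image.1 (hrk ▸ hp k hk)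
    rw [iterate_succ_apply', iterate_succ_apply', hrk, hr _ hmem]

theorem product_map_unique_periodic_point_general
    (f g : ℝ → ℝ)
    (hfm : StrictMonoOn f (Icc (-1:ℝ) 1)) (hgm : StrictMonoOn g (Icc (-1:ℝ) 1))
    (hffix : ∀ x ∈ Icc (-1:ℝ) 1, f x = x ↔ x = 0)
    (hgfix : ∀ y ∈ Icc (-1:ℝ) 1, g y = y ↔ y = 0)
    (h : (ℝ × ℝ) ≃ₜ (ℝ × ℝ))
    (hhx : ∀ x ∈ Icc (-1:ℝ) 1, h (x, 0) = (x, 0))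
    (r : ℝ × ℝ → ℝ × ℝ)
    (hr : ∀ x ∈ Icc (-1:ℝ) 1, ∀ y ∈ Icc (-1:ℝ) 1, r (h (x, y)) = h (f x, g y))
    (n : ℕ) (hn : 1 ≤ n) (p : ℝ × ℝ)
    (hp : ∀ k < n, r^[k] p ∈ h '' (Icc (-1:ℝ) 1 ×ˢ Icc (-1:ℝ) 1))
    (hfix : r^[n] p = p) :
    p = (0, 0) := by
  set x := h.symm p
  have horbit : ∀ k ≤ n, r^[k] p = h ((Prod.map f g)^[k] x) :=
    h.toEquiv.iterate_eq_of_semiconj_on (fun q hq => hr q.1 hq.1 q.2 hq.2) hp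
  have hmem : ∀ k < n, (Prod.map f g)^[k] x ∈ Icc (-1:ℝ) 1 ×ˢ Icc (-1:ℝ) 1 := fun k hk =>
    h.injective.mem_set_image.1 (horbit k hk.le ▸ hp k hk)
  have hper : IsPeriodicPt (Prod.map f g) n x :=
    h.injective (by rw [← horbit n le_rfl, hfix, h.apply_symm_apply])
  rw [isPeriodicPt_prodMap] at hper
  have hx₁ : x.1 = 0 := (hffix _ (hmem 0 hn).1).1 <|
    hfm.isFixedPt_of_isPeriodicPt hn (fun k hk => by simpa using (hmem k hk).1) hper.1
  have hx₂ : x.2 = 0 := (hgfix _ (hmem 0 hn).2).1 <|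
    hgm.isFixedPt_of_isPeriodicPt hn (fun k hk => by simpa using (hmem k hk).2) hper.2
  have hx : x = (0, 0) := Prod.ext hx₁ hx₂
  calc p = h x := (h.apply_symm_apply p).symm
    _ = (0, 0) := by rw [hx, hhx 0 (by norm_num)]

/-- item (1) of the proposition on product maps.
If `f, g : [−1,1] → ℝ` are continuous strictly-increasing maps whose unique fixed
point is `0`, `h` is a homeomorphism of `ℝ²` fixing the two coordinate segments
pointwise, and `r` is the conjugate of `f × g` by `h` on `h([−1,1]²)`, then the only
point of `h([−1,1]²)` whose first `n − 1` iterates stay in `h([−1,1]²)` and which is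
fixed by `rⁿ` is the origin; i.e. the displacement vector field `X(p) = rⁿ(p) − p`
vanishes only at the origin. -/
theorem product_map_unique_periodic_point
    (f g : ℝ → ℝ)
    (hfc : ContinuousOn f (Icc (-1:ℝ) 1)) (hgc : ContinuousOn g (Icc (-1:ℝ) 1))
    (hfm : StrictMonoOn f (Icc (-1:ℝ) 1)) (hgm : StrictMonoOn g (Icc (-1:ℝ) 1))
    (hffix : ∀ x ∈ Icc (-1:ℝ) 1, f x = x ↔ x = 0)
    (hgfix : ∀ y ∈ Icc (-1:ℝ) 1, g y = y ↔ y = 0)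
    (h : (ℝ × ℝ) ≃ₜ (ℝ × ℝ))
    (hhx : ∀ x ∈ Icc (-1:ℝ) 1, h (x, 0) = (x, 0))
    (hhy : ∀ y ∈ Icc (-1:ℝ) 1, h (0, y) = (0, y))
    (r : ℝ × ℝ → ℝ × ℝ)
    (hr : ∀ x ∈ Icc (-1:ℝ) 1, ∀ y ∈ Icc (-1:ℝ) 1, r (h (x, y)) = h (f x, g y))
    (n : ℕ) (hn : 1 ≤ n) (p : ℝ × ℝ)
    (hp : ∀ k < n, r^[k] p ∈ h '' (Icc (-1:ℝ) 1 ×ˢ Icc (-1:ℝ) 1))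
    (hfix : r^[n] p = p) :
    p = (0, 0) :=
  product_map_unique_periodic_point_general f g hfm hgm hffix hgfix h hhx r hr n hn p hp hfix
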